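/- arXiv:1905.12298 — 3 statements merged into one kernel-verified Lean document; each statement's English description precedes it below -/
import Mathlib

section
/- Suppose a bandit policy π satisfies ε-differential privacy over the horizon: for all neighbouring reward sequences r^{t-1}, r̂^{t-1} (differing in one coordinate) and all action sequences, π(a^t | r^{t-1}) ≤ e^ε π(a^t | r̂^{t-1}). Then π satisfies 2ε-instantaneous differential privacy: for every t, π(a_t | a^{t-1}, r^{t-1}) ≤ e^{2ε} π(a_t | a^{t-1}, r̂^{t-1}). -/
open Real Finset

/-- Two reward sequences are neighbouring if they agree at all but one coordinate. -/
def RewardNeighbor {R : ℕ → Type*} (r r' : (n : ℕ) → R n) : Prop :=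
  ∃ k, ∀ j, j ≠ k → r j = r' j

/-- if the prefix action probabilities
`pol(a^t | r^{t-1}) = ∏_{s<t} step s a r` satisfy ε-differential privacy for neighbouring
reward sequences, then each conditional `step t a r = pol(a_t | a^{t-1}, r^{t-1})`
satisfies 2ε-instantaneous differential privacy. -/
theorem dp_implies_instantaneous_dp
    {K : ℕ} (ε : ℝ)
    -- conditional probability of the action at time `s` given past actions and past rewards
    (step : ℕ → (ℕ → Fin K) → (ℕ → ℝ) → ℝ)
    -- probability of an action prefix of length `t` given the reward sequence
    (prefixProb : ℕ → (ℕ → Fin K) → (ℕ → ℝ) → ℝ)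
    (hprefix : ∀ t a r, prefixProb t a r = ∏ s ∈ Finset.range t, step s a r)
    (hpos : ∀ t a r, 0 < prefixProb t a r)
    -- ε-differential privacy of the action-prefix probabilities
    (hDP : ∀ t (a : ℕ → Fin K) (r r' : ℕ → ℝ), RewardNeighbor r r' →
      prefixProb t a r ≤ Real.exp ε * prefixProb t a r') :
    ∀ t (a : ℕ → Fin K) (r r' : ℕ → ℝ), RewardNeighbor r r' →
      step t a r ≤ Real.exp (2 * ε) * step t a r' := by
  intro t a r r' hnb
  have hnb' : RewardNeighbor r' r := by
    obtain ⟨k, hk⟩ := hnb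
    exact ⟨k, fun j hj => (hk j hj).symm⟩
  -- prefixProb (t+1) = prefixProb t * step t
  have hsucc : ∀ (ρ : ℕ → ℝ), prefixProb (t + 1) a ρ = prefixProb t a ρ * step t a ρ := by
    intro ρ
    rw [hprefix, hprefix, Finset.prod_range_succ]
  have hstep : ∀ (ρ : ℕ → ℝ), step t a ρ = prefixProb (t + 1) a ρ / prefixProb t a ρ := by
    intro ρ
    rw [hsucc ρ, mul_div_cancel_left₀ _ (hpos t a ρ).ne']
  have h1 : prefixProb (t + 1) a r ≤ Real.exp ε * prefixProb (t + 1) a r' := hDP (t + 1) a r r' hnb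
  have h2 : prefixProb t a r' ≤ Real.exp ε * prefixProb t a r := hDP t a r' r hnb'
  have hp1 := hpos t a r
  have hp2 := hpos t a r'
  have hp3 := hpos (t + 1) a r'
  rw [hstep r, hstep r']
  rw [div_le_iff₀ hp1]
  have key : prefixProb (t + 1) a r ≤
      Real.exp (2 * ε) * (prefixProb (t + 1) a r' / prefixProb t a r' * prefixProb t a r) := by
    calc prefixProb (t + 1) a r ≤ Real.exp ε * prefixProb (t + 1) a r' := h1
      _ = Real.exp ε * (prefixProb (t + 1) a r' / prefixProb t a r') * prefixProb t a r' := by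
          field_simp
      _ ≤ Real.exp ε * (prefixProb (t + 1) a r' / prefixProb t a r') *
            (Real.exp ε * prefixProb t a r) := by
          apply mul_le_mul_of_nonneg_left h2
          positivity
      _ = Real.exp (2 * ε) * (prefixProb (t + 1) a r' / prefixProb t a r' * prefixProb t a r) := by
          rw [two_mul, Real.exp_add]; ring
  linarith [key]
end

section
/- Local private KL-divergence bound for bandits: let π be a bandit policy whose observed rewards pass through an ε-locally differentially private channel M, so that the reward the algorithm observes from arm a has distribution g_a^i = M ∘ f_a^i in environment ν_i (i = 1, 2). Then the induced history distributions satisfy KL(P₁‖P₂) ≤ 2 min{4, e^{2ε}} (e^ε − 1)² Σ_{a=1}^K E_{P₁}[N_a(T)] KL(f_a^1 ‖ f_a^2). -/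
open Real Finset

/-- local private KL-divergence bound for bandits. Writing `KLP` for the
KL divergence between the induced history distributions, `KLg a` (resp. `KLg' a`) for the
KL divergences between the privatized reward distributions `g_a^1, g_a^2` of arm `a` in
the two directions, `KLf a` for `KL(f_a^1‖f_a^2)`, `EN a = E_{P₁}[N_a(T)]`, and `TV a`
for `‖f_a^1 − f_a^2‖_TV`: if the KL decomposition, the Duchi–Jordan–Wainwright bound and
Pinsker's inequality hold, then
`KL(P₁‖P₂) ≤ 2·min{4, e^{2ε}}·(e^ε − 1)²·Σ_a E_{P₁}[N_a(T)]·KL(f_a^1‖f_a^2)`. -/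
theorem local_private_kl_decomposition
    {K : ℕ} (ε : ℝ)
    (KLP : ℝ) (KLg KLg' KLf EN TV : Fin K → ℝ)
    (hENnonneg : ∀ a, 0 ≤ EN a)
    (hKLg'nonneg : ∀ a, 0 ≤ KLg' a)
    -- the KL divergence decomposition over the history distributions
    (hdecomp : KLP = ∑ a, EN a * KLg a)
    -- Duchi–Jordan–Wainwright: KL(g_a^1‖g_a^2) + KL(g_a^2‖g_a^1) ≤ min{4,e^{2ε}}(e^ε−1)²‖f_a^1−f_a^2‖_TV²
    (hDJW : ∀ a, KLg a + KLg' a ≤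
      min 4 (Real.exp (2 * ε)) * (Real.exp ε - 1) ^ 2 * (TV a) ^ 2)
    -- Pinsker's inequality
    (hPinsker : ∀ a, (TV a) ^ 2 ≤ 2 * KLf a) :
    KLP ≤ 2 * min 4 (Real.exp (2 * ε)) * (Real.exp ε - 1) ^ 2 * ∑ a, EN a * KLf a := by
  have hmin : (0:ℝ) ≤ min 4 (Real.exp (2 * ε)) :=
    le_min (by norm_num) (Real.exp_nonneg _)
  have hsq : (0:ℝ) ≤ (Real.exp ε - 1) ^ 2 := sq_nonneg _
  have key : ∀ a, KLg a ≤ 2 * min 4 (Real.exp (2 * ε)) * (Real.exp ε - 1) ^ 2 * KLf a := by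
    intro a
    have h1 := hDJW a
    have h2 : min 4 (Real.exp (2 * ε)) * (Real.exp ε - 1) ^ 2 * (TV a) ^ 2 ≤
        min 4 (Real.exp (2 * ε)) * (Real.exp ε - 1) ^ 2 * (2 * KLf a) :=
      mul_le_mul_of_nonneg_left (hPinsker a) (mul_nonneg hmin hsq)
    nlinarith [hKLg'nonneg a]
  rw [hdecomp, Finset.mul_sum]
  apply Finset.sum_le_sum
  intro a _
  calc EN a * KLg a ≤ EN a * (2 * min 4 (Real.exp (2 * ε)) * (Real.exp ε - 1) ^ 2 * KLf a) :=
        mul_le_mul_of_nonneg_left (key a) (hENnonneg a)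
    _ = 2 * min 4 (Real.exp (2 * ε)) * (Real.exp ε - 1) ^ 2 * (EN a * KLf a) := by ring
end

section
/- Bretagnolle–Huber inequality: for any two probability measures P and Q on the same measurable space and any event E, P(E) + Q(Eᶜ) ≥ (1/2) exp(−KL(P‖Q)). -/
/-!
Write `G = dQ/dP`. Since `min(G, 1) ≤ 1` on `E` and `min(G, 1) ≤ G` on `Eᶜ`, we get
`∫ min(G, 1) dP ≤ P(E) + Q(Eᶜ)`, while `∫ max(G, 1) dP ≤ ∫ (G + 1) dP ≤ 2`. As
`√G = √(min(G, 1) · max(G, 1))`, Cauchy–Schwarz bounds `(∫ √G dP)²` by the product of these two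
integrals. Finally `exp(-llr P Q) = G` holds `P`-a.e., so Jensen's inequality for `exp` applied
to `-llr/2` gives `exp(-KL/2) ≤ ∫ √G dP`.
-/

open MeasureTheory Real
open scoped Classical

section

variable {Ω : Type*} [MeasurableSpace Ω]

theorem exp_integral_le_integral_exp {μ : Measure Ω} [IsProbabilityMeasure μ] {f : Ω → ℝ}
    (hf : Integrable f μ) (hexp : Integrable (fun x ↦ exp (f x)) μ) :
    exp (∫ x, f x ∂μ) ≤ ∫ x, exp (f x) ∂μ :=
  convexOn_exp.map_integral_le continuous_exp.continuousOn isClosed_univ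
    (.of_forall fun _ ↦ Set.mem_univ _) hf hexp

theorem memLp_two_sqrt {μ : Measure Ω} {f : Ω → ℝ} (hf₀ : 0 ≤ᵐ[μ] f) (hf : Integrable f μ) :
    MemLp (fun x ↦ √(f x)) 2 μ := by
  refine (memLp_two_iff_integrable_sq (continuous_sqrt.comp_aestronglyMeasurable hf.1)).2 ?_
  refine hf.congr ?_
  filter_upwards [hf₀] with x hx
  exact (sq_sqrt hx).symm

theorem integral_sqrt_mul_le {μ : Measure Ω} {f g : Ω → ℝ} (hf₀ : 0 ≤ᵐ[μ] f) (hg₀ : 0 ≤ᵐ[μ] g)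
    (hf : Integrable f μ) (hg : Integrable g μ) :
    ∫ x, √(f x * g x) ∂μ ≤ √(∫ x, f x ∂μ) * √(∫ x, g x ∂μ) := by
  have hsq : ∀ {h : Ω → ℝ}, 0 ≤ᵐ[μ] h → ∫ x, √(h x) ^ (2 : ℝ) ∂μ = ∫ x, h x ∂μ := fun h₀ ↦
    integral_congr_ae <| by
      filter_upwards [h₀] with x hx
      rw [rpow_two, sq_sqrt hx]
  have holder := integral_mul_le_Lp_mul_Lq_of_nonneg (μ := μ) (p := 2) (q := 2)
    (by simpa using Real.HolderConjugate.two_two) (.of_forall fun x ↦ sqrt_nonneg (f x))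
    (.of_forall fun x ↦ sqrt_nonneg (g x))
    (by simpa using memLp_two_sqrt hf₀ hf) (by simpa using memLp_two_sqrt hg₀ hg)
  rw [hsq hf₀, hsq hg₀, ← sqrt_eq_rpow, ← sqrt_eq_rpow] at holder
  refine le_of_eq_of_le (integral_congr_ae ?_) holder
  filter_upwards [hf₀] with x hx
  exact sqrt_mul hx _

variable (P Q : Measure Ω) [IsFiniteMeasure Q]

theorem integral_min_toReal_rnDeriv_one_le [IsFiniteMeasure P] {E : Set Ω} (hE : MeasurableSet E) :
    ∫ x, min (Q.rnDeriv P x).toReal 1 ∂P ≤ P.real E + Q.real Eᶜ := by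
  have hint : Integrable (fun x ↦ min (Q.rnDeriv P x).toReal 1) P :=
    Measure.integrable_toReal_rnDeriv.inf (integrable_const 1)
  rw [← integral_add_compl hE hint]
  gcongr
  · calc ∫ x in E, min (Q.rnDeriv P x).toReal 1 ∂P ≤ ∫ _ in E, (1 : ℝ) ∂P :=
          setIntegral_mono_on hint.integrableOn (integrableOn_const (measure_ne_top P E)) hE
            fun x _ ↦ min_le_right _ _
      _ = P.real E := by simp
  · calc ∫ x in Eᶜ, min (Q.rnDeriv P x).toReal 1 ∂P ≤ ∫ x in Eᶜ, (Q.rnDeriv P x).toReal ∂P :=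
          setIntegral_mono_on hint.integrableOn Measure.integrable_toReal_rnDeriv.integrableOn
            hE.compl fun x _ ↦ min_le_left _ _
      _ ≤ Q.real Eᶜ := Measure.setIntegral_toReal_rnDeriv_le (measure_ne_top Q _)

theorem integral_max_toReal_rnDeriv_one_le [IsFiniteMeasure P] :
    ∫ x, max (Q.rnDeriv P x).toReal 1 ∂P ≤ Q.real Set.univ + P.real Set.univ := by
  have hG := Measure.integrable_toReal_rnDeriv (μ := Q) (ν := P)
  calc ∫ x, max (Q.rnDeriv P x).toReal 1 ∂P ≤ ∫ x, ((Q.rnDeriv P x).toReal + 1) ∂P :=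
        integral_mono (hG.sup (integrable_const 1)) (hG.add (integrable_const 1))
          fun x ↦ max_le_add_of_nonneg ENNReal.toReal_nonneg zero_le_one
    _ = ∫ x, (Q.rnDeriv P x).toReal ∂P + P.real Set.univ := by
        simp [integral_add hG (integrable_const 1)]
    _ ≤ Q.real Set.univ + P.real Set.univ := by
        gcongr
        simpa using Measure.setIntegral_toReal_rnDeriv_le (μ := Q) (ν := P) (s := Set.univ)
          (measure_ne_top Q _)

theorem exp_neg_half_integral_llr_le [IsProbabilityMeasure P] (hPQ : P ≪ Q)
    (hint : Integrable (llr P Q) P) :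
    exp (-(∫ x, llr P Q x ∂P) / 2) ≤ ∫ x, √(Q.rnDeriv P x).toReal ∂P := by
  have hsqrt : (fun x ↦ exp (-llr P Q x / 2)) =ᵐ[P] fun x ↦ √(Q.rnDeriv P x).toReal := by
    filter_upwards [exp_neg_llr hPQ] with x hx
    rw [exp_half, hx]
  have hsqrt_int : Integrable (fun x ↦ √(Q.rnDeriv P x).toReal) P :=
    (memLp_two_sqrt (.of_forall fun _ ↦ ENNReal.toReal_nonneg)
      Measure.integrable_toReal_rnDeriv).integrable one_le_two
  calc exp (-(∫ x, llr P Q x ∂P) / 2) = exp (∫ x, -llr P Q x / 2 ∂P) := by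
        rw [integral_div, integral_neg]
    _ ≤ ∫ x, exp (-llr P Q x / 2) ∂P :=
        exp_integral_le_integral_exp (hint.neg.div_const 2) (hsqrt_int.congr hsqrt.symm)
    _ = ∫ x, √(Q.rnDeriv P x).toReal ∂P := integral_congr_ae hsqrt

theorem exp_neg_integral_llr_le_integral_min_mul_integral_max [IsProbabilityMeasure P]
    (hPQ : P ≪ Q) (hint : Integrable (llr P Q) P) :
    exp (-(∫ x, llr P Q x ∂P)) ≤
      (∫ x, min (Q.rnDeriv P x).toReal 1 ∂P) * ∫ x, max (Q.rnDeriv P x).toReal 1 ∂P := by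
  set G : Ω → ℝ := fun x ↦ (Q.rnDeriv P x).toReal
  have hG₀ : 0 ≤ᵐ[P] G := .of_forall fun _ ↦ ENNReal.toReal_nonneg
  have hG : Integrable G P := Measure.integrable_toReal_rnDeriv
  have hmin₀ : 0 ≤ᵐ[P] fun x ↦ min (G x) 1 := hG₀.mono fun x hx ↦ le_min hx zero_le_one
  have hmax₀ : 0 ≤ᵐ[P] fun x ↦ max (G x) 1 :=
    .of_forall fun x ↦ zero_le_one.trans (le_max_right _ _)
  have hCS : ∫ x, √(G x) ∂P ≤ √(∫ x, min (G x) 1 ∂P) * √(∫ x, max (G x) 1 ∂P) := by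
    simpa only [min_mul_max, mul_one] using integral_sqrt_mul_le hmin₀ hmax₀
      (hG.inf (integrable_const 1)) (hG.sup (integrable_const 1))
  calc exp (-(∫ x, llr P Q x ∂P)) = exp (-(∫ x, llr P Q x ∂P) / 2) ^ 2 := by
        rw [sq, ← exp_add]; ring_nf
    _ ≤ (√(∫ x, min (G x) 1 ∂P) * √(∫ x, max (G x) 1 ∂P)) ^ 2 := by
        gcongr
        exact (exp_neg_half_integral_llr_le P Q hPQ hint).trans hCS
    _ = (∫ x, min (G x) 1 ∂P) * ∫ x, max (G x) 1 ∂P := by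
        rw [mul_pow, sq_sqrt (integral_nonneg_of_ae hmin₀), sq_sqrt (integral_nonneg_of_ae hmax₀)]

end

/-- Bretagnolle–Huber: for probability measures `P, Q` and any event `E`,
`P(E) + Q(Eᶜ) ≥ (1/2)·exp(−KL(P‖Q))`, where `KL(P‖Q) = ∫ log(dP/dQ) dP` when `P ≪ Q`
(with the log-likelihood ratio integrable) and `KL(P‖Q) = +∞` otherwise, the latter case
being encoded by `exp(−KL) = 0`. -/
theorem bretagnolle_huber
    {Ω : Type*} [MeasurableSpace Ω]
    (P Q : Measure Ω) [IsProbabilityMeasure P] [IsProbabilityMeasure Q]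
    (E : Set Ω) (hE : MeasurableSet E) :
    (P E).toReal + (Q Eᶜ).toReal ≥
      (1 / 2) *
        (if P ≪ Q ∧ Integrable (llr P Q) P then Real.exp (-(∫ x, llr P Q x ∂P)) else 0) := by
  split_ifs with h
  · obtain ⟨hPQ, hint⟩ := h
    have hmin₀ : 0 ≤ ∫ x, min (Q.rnDeriv P x).toReal 1 ∂P :=
      integral_nonneg fun x ↦ le_min ENNReal.toReal_nonneg zero_le_one
    have hmin := integral_min_toReal_rnDeriv_one_le P Q hE
    have hmax := integral_max_toReal_rnDeriv_one_le P Q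
    have hKL := exp_neg_integral_llr_le_integral_min_mul_integral_max P Q hPQ hint
    simp only [measureReal_def, measure_univ, ENNReal.toReal_one] at hmin hmax
    nlinarith
  · rw [mul_zero]
    positivity
end
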